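/- Let m ≥ 1 and k ≥ 1 be integers with gcd(k, τ(m)) = 1, where τ(m) is the number of divisors of m. Then σ(m) divides σ_k(m). -/

import Mathlib

/-!
For a prime power, `σ_k(p^e) = 1 + p^k + ⋯ + (p^k)^e`. Modulo `N = σ(p^e) = 1 + p + ⋯ + p^e` we
have `p^(e+1) ≡ 1`, so the exponents `i k` may be read modulo `e + 1`; when `k` is coprime to
`e + 1 = τ(p^e)`, multiplication by `k` permutes the residues, hence `σ_k(p^e) ≡ N ≡ 0 (mod N)`.
Since `τ(p^e) ∣ τ(m)` for every prime power exactly dividing `m`, multiplicativity of `σ_k`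
finishes the proof.
-/

open Finset ArithmeticFunction
open scoped ArithmeticFunction.sigma

theorem Finset.sum_range_mul_mod_of_coprime {M : Type*} [AddCommMonoid M] (f : ℕ → M)
    {n k : ℕ} (hk : k.Coprime n) : ∑ i ∈ range n, f (i * k % n) = ∑ i ∈ range n, f i := by
  have hmaps : Set.MapsTo (fun i ↦ i * k % n) (range n) (range n) := fun i hi ↦
    mem_range.mpr (Nat.mod_lt _ (Nat.zero_lt_of_lt (mem_range.mp hi)))
  have hinj : Set.InjOn (fun i ↦ i * k % n) (range n) := fun i hi j hj hij ↦ by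
    have hmod : i ≡ j [MOD n] := Nat.ModEq.cancel_right_of_coprime hk.symm hij
    rwa [Nat.ModEq, Nat.mod_eq_of_lt (mem_range.mp hi), Nat.mod_eq_of_lt (mem_range.mp hj)]
      at hmod
  exact sum_nbij _ hmaps hinj (surjOn_of_injOn_of_card_le _ hmaps hinj le_rfl) fun _ _ ↦ rfl

theorem geom_sum_pow_eq_zero_of_coprime {R : Type*} [Ring R] {x : R} {n k : ℕ}
    (hk : k.Coprime n) (hx : ∑ i ∈ range n, x ^ i = 0) : ∑ i ∈ range n, (x ^ k) ^ i = 0 := by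
  have hxn : x ^ n = 1 := by
    have := geom_sum_mul x n
    rwa [hx, zero_mul, eq_comm, sub_eq_zero] at this
  calc ∑ i ∈ range n, (x ^ k) ^ i
      = ∑ i ∈ range n, x ^ (i * k % n) := by
        refine sum_congr rfl fun i _ ↦ ?_
        rw [← pow_mul, mul_comm, ← pow_eq_pow_mod _ hxn]
    _ = ∑ i ∈ range n, x ^ i := sum_range_mul_mod_of_coprime (x ^ ·) hk
    _ = 0 := hx

theorem geom_sum_dvd_geom_sum_pow_of_coprime {R : Type*} [CommRing R] (x : R) {n k : ℕ}
    (hk : k.Coprime n) : ∑ i ∈ range n, x ^ i ∣ ∑ i ∈ range n, (x ^ k) ^ i := by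
  rw [← Ideal.Quotient.eq_zero_iff_dvd]
  have hx := (Ideal.Quotient.eq_zero_iff_dvd _ _).mpr (dvd_refl (∑ i ∈ range n, x ^ i))
  simp only [map_sum, map_pow] at hx ⊢
  exact geom_sum_pow_eq_zero_of_coprime hk hx

theorem Nat.geom_sum_dvd_geom_sum_pow_of_coprime (x : ℕ) {n k : ℕ} (hk : k.Coprime n) :
    ∑ i ∈ range n, x ^ i ∣ ∑ i ∈ range n, (x ^ k) ^ i := by
  exact_mod_cast _root_.geom_sum_dvd_geom_sum_pow_of_coprime (x : ℤ) hk

theorem ArithmeticFunction.sigma_one_prime_pow_dvd_sigma {p e k : ℕ} (hp : p.Prime)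
    (hk : k.Coprime (e + 1)) : σ 1 (p ^ e) ∣ σ k (p ^ e) := by
  simp only [sigma_apply_prime_pow hp, mul_one, pow_mul']
  exact Nat.geom_sum_dvd_geom_sum_pow_of_coprime p hk

theorem ArithmeticFunction.IsMultiplicative.apply_ordProj_dvd {R : Type*} [CommMonoidWithZero R]
    {f : ArithmeticFunction R} (hf : f.IsMultiplicative) {n p : ℕ} (hn : n ≠ 0)
    (hp : p ∈ n.primeFactors) : f (p ^ n.factorization p) ∣ f n := by
  rw [hf.multiplicative_factorization f hn]
  exact dvd_prod_of_mem _ (by rwa [Nat.support_factorization])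

theorem ArithmeticFunction.IsMultiplicative.dvd_of_forall_ordProj_dvd {R : Type*}
    [CommMonoidWithZero R] {f g : ArithmeticFunction R} (hf : f.IsMultiplicative)
    (hg : g.IsMultiplicative) {n : ℕ} (hn : n ≠ 0)
    (h : ∀ p ∈ n.primeFactors, f (p ^ n.factorization p) ∣ g (p ^ n.factorization p)) :
    f n ∣ g n := by
  rw [hf.multiplicative_factorization f hn, hg.multiplicative_factorization g hn]
  exact prod_dvd_prod_of_dvd _ _ fun p hp ↦ h p (by rwa [← Nat.support_factorization])

theorem sigma_dvd_sigma_k_general (m k : ℕ) (hm : 1 ≤ m)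
    (h : Nat.gcd k (ArithmeticFunction.sigma 0 m) = 1) :
    ArithmeticFunction.sigma 1 m ∣ ArithmeticFunction.sigma k m := by
  have hm0 : m ≠ 0 := Nat.one_le_iff_ne_zero.mp hm
  refine isMultiplicative_sigma.dvd_of_forall_ordProj_dvd isMultiplicative_sigma hm0
    fun p hp ↦ sigma_one_prime_pow_dvd_sigma (Nat.prime_of_mem_primeFactors hp) ?_
  have hτ : m.factorization p + 1 ∣ σ 0 m := by
    rw [← sigma_zero_apply_prime_pow (Nat.prime_of_mem_primeFactors hp)]
    exact isMultiplicative_sigma.apply_ordProj_dvd hm0 hp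
  exact Nat.Coprime.coprime_dvd_right hτ h

theorem sigma_dvd_sigma_k (m k : ℕ) (hm : 1 ≤ m) (hk : 1 ≤ k)
    (h : Nat.gcd k (ArithmeticFunction.sigma 0 m) = 1) :
    ArithmeticFunction.sigma 1 m ∣ ArithmeticFunction.sigma k m :=
  sigma_dvd_sigma_k_general m k hm h
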